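/- The recurrence coefficient β_n(t) for the weight w(x,t) = (1-x^2)^α e^{-t x^2} on [-1,1] satisfies the second-order nonlinear difference equation (n - 2tβ_n)^2 + 2α(n - 2tβ_n) - β_n (2n - 1 + 2α - 2tβ_{n-1} - 2tβ_n)(2n + 1 + 2α - 2tβ_n - 2tβ_{n+1}) = 0 for all n ≥ 1. -/

import Mathlib

open MeasureTheory Polynomial intervalIntegral

/-!
Write `⟨q⟩ = ∫₋₁¹ q w`. Since `((1 - x²) w)' = -(2(1 + α) x + 2t x (1 - x²)) w` and
`(1 - x²) w` vanishes at `±1`, integration by parts gives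
`⟨(1 - x²) Q'⟩ = ⟨(2(1 + α) x + 2t x (1 - x²)) Q⟩` for every polynomial `Q`. Taking
`Q = P_{n+1} P_n` and reducing with the three-term recurrence and orthogonality expresses
`⟨(1 - x²) P'_{n+1} P_n⟩` through the `β`'s; pairing the derivative of the recurrence with
`(1 - x²) P_n` then yields the first-order relation
`β_{n+1} R_{n+1} - β_n R_{n-1} = r_{n+1} - r_n`, where `r_n = n - 2tβ_n` and
`R_n = 2n + 1 + 2α - 2t(β_n + β_{n+1})`. As `r_{n+1} + r_n + 2α = R_n`, this makes
`r_n² + 2α r_n - β_n R_n R_{n-1}` independent of `n`, and it vanishes at `n = 0`.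
-/

theorem Polynomial.Monic.degree_sub_C_coeff_mul_lt {R : Type*} [Ring R] {p q : R[X]}
    (hp : p.Monic) (hq : q.natDegree ≤ p.natDegree) :
    (q - C (q.coeff p.natDegree) * p).degree < p.natDegree := by
  rw [degree_lt_iff_coeff_zero]
  intro m hm
  rw [coeff_sub, coeff_C_mul]
  rcases hm.eq_or_lt with rfl | hlt
  · rw [hp.coeff_natDegree, mul_one, sub_self]
  · rw [coeff_eq_zero_of_natDegree_lt (hq.trans_lt hlt), coeff_eq_zero_of_natDegree_lt hlt,
      mul_zero, sub_zero]

theorem LinearMap.map_C_mul {R : Type*} [CommSemiring R] (L : R[X] →ₗ[R] R) (c : R)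
    (q : R[X]) : L (C c * q) = c * L q := by
  rw [C_mul', map_smul, smul_eq_mul]

structure IsMonicOrthogonal {K : Type*} [Field K] (L : K[X] →ₗ[K] K) (P : ℕ → K[X]) :
    Prop where
  monic : ∀ n, (P n).Monic
  natDegree_eq : ∀ n, (P n).natDegree = n
  map_mul_eq_zero : ∀ m n, m ≠ n → L (P m * P n) = 0

namespace IsMonicOrthogonal

variable {K : Type*} [Field K] {L : K[X] →ₗ[K] K} {P : ℕ → K[X]}

theorem apply_zero (hP : IsMonicOrthogonal L P) : P 0 = 1 :=
  eq_one_of_monic_natDegree_zero (hP.monic 0) (hP.natDegree_eq 0)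

theorem coeff_self (hP : IsMonicOrthogonal L P) (n : ℕ) : (P n).coeff n = 1 := by
  simpa [hP.natDegree_eq] using (hP.monic n).coeff_natDegree

theorem apply_one_eq_X (hP : IsMonicOrthogonal L P) (hX : L X = 0) (h0 : L (P 0 * P 0) ≠ 0) :
    P 1 = X := by
  have hP1 := (hP.monic 1).eq_X_add_C (hP.natDegree_eq 1)
  have horth := hP.map_mul_eq_zero 1 0 one_ne_zero
  rw [hP.apply_zero, mul_one, hP1, map_add, hX, zero_add, ← mul_one (C _), L.map_C_mul] at horth
  rw [hP.apply_zero, mul_one] at h0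
  rw [hP1, (mul_eq_zero.mp horth).resolve_right h0, map_zero, add_zero]

theorem map_mul_eq_zero_of_degree_lt (hP : IsMonicOrthogonal L P) {q : K[X]} {n : ℕ}
    (hq : q.degree < n) : L (q * P n) = 0 := by
  suffices ∀ d : ℕ, ∀ q : K[X], q.degree < d → d ≤ n → L (q * P n) = 0 from
    this n q hq le_rfl
  intro d
  induction d with
  | zero =>
    intro q hq _
    rw [Nat.cast_zero, Nat.WithBot.lt_zero_iff, degree_eq_bot] at hq
    rw [hq, zero_mul, map_zero]
  | succ d ih =>
    intro q hq hdn
    have hqd : q.natDegree ≤ (P d).natDegree := by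
      rw [hP.natDegree_eq]
      exact natDegree_le_of_degree_le (Order.le_of_lt_succ (by exact_mod_cast hq))
    have hlow := (hP.monic d).degree_sub_C_coeff_mul_lt hqd
    rw [hP.natDegree_eq] at hlow
    calc L (q * P n) = L ((q - C (q.coeff d) * P d) * P n + C (q.coeff d) * (P d * P n)) := by
          congr 1; ring
      _ = 0 := by
          rw [map_add, L.map_C_mul, ih _ hlow (by omega), hP.map_mul_eq_zero d n (by omega),
            mul_zero, add_zero]

theorem map_mul_eq_coeff_mul (hP : IsMonicOrthogonal L P) {q : K[X]} {n : ℕ}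
    (hq : q.natDegree ≤ n) : L (q * P n) = q.coeff n * L (P n * P n) := by
  have hlow := (hP.monic n).degree_sub_C_coeff_mul_lt (q := q) (by rwa [hP.natDegree_eq])
  rw [hP.natDegree_eq] at hlow
  calc L (q * P n) = L ((q - C (q.coeff n) * P n) * P n + C (q.coeff n) * (P n * P n)) := by
        congr 1; ring
    _ = q.coeff n * L (P n * P n) := by
        rw [map_add, L.map_C_mul, hP.map_mul_eq_zero_of_degree_lt hlow, zero_add]

theorem map_X_pow_mul_mul_add (hP : IsMonicOrthogonal L P) (k n : ℕ) :
    L (X ^ k * P n * P (n + k)) = L (P (n + k) * P (n + k)) := by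
  rw [hP.map_mul_eq_coeff_mul, coeff_X_pow_mul, hP.coeff_self, one_mul]
  calc (X ^ k * P n).natDegree ≤ (X ^ k : K[X]).natDegree + (P n).natDegree := natDegree_mul_le
    _ ≤ n + k := by
        rw [hP.natDegree_eq, add_comm]; exact add_le_add_right (natDegree_X_pow_le k) n

theorem map_X_mul_mul_succ (hP : IsMonicOrthogonal L P) (n : ℕ) :
    L (X * P n * P (n + 1)) = L (P (n + 1) * P (n + 1)) := by
  simpa using hP.map_X_pow_mul_mul_add 1 n

theorem map_one_sub_X_sq_mul_derivative_mul_succ (hP : IsMonicOrthogonal L P) (n : ℕ) :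
    L ((1 - X ^ 2) * derivative (P n) * P (n + 1)) = -n * L (P (n + 1) * P (n + 1)) := by
  cases n with
  | zero => simp [hP.apply_zero]
  | succ n =>
    have hdeg : ((1 - X ^ 2) * derivative (P (n + 1))).natDegree ≤ n + 2 := by
      refine natDegree_mul_le.trans ?_
      have h1 : (1 - X ^ 2 : K[X]).natDegree ≤ 2 := by compute_degree
      have h2 := natDegree_derivative_le (P (n + 1))
      rw [hP.natDegree_eq] at h2
      omega
    rw [hP.map_mul_eq_coeff_mul hdeg, sub_mul, one_mul, coeff_sub, coeff_X_pow_mul,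
      coeff_derivative, coeff_derivative, hP.coeff_self,
      coeff_eq_zero_of_natDegree_lt (by rw [hP.natDegree_eq]; omega)]
    push_cast
    ring

section Recurrence

/-! At `n = 0` the recurrence below involves `P (0 - 1) = P 0`; together with `β 0 = 0` this is
the convention `P₋₁ = 0`. -/

variable {β : ℕ → K}

theorem map_mul_self_succ (hP : IsMonicOrthogonal L P)
    (hrec : ∀ n, X * P n = P (n + 1) + C (β n) * P (n - 1)) (n : ℕ) :
    L (P (n + 1) * P (n + 1)) = β (n + 1) * L (P n * P n) := by
  rw [← hP.map_X_mul_mul_succ n]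
  calc L (X * P n * P (n + 1)) = L (P (n + 2) * P n + C (β (n + 1)) * (P n * P n)) := by
        rw [mul_right_comm, hrec (n + 1), Nat.add_sub_cancel]
        congr 1; ring
    _ = β (n + 1) * L (P n * P n) := by
        rw [map_add, L.map_C_mul, hP.map_mul_eq_zero _ _ (by omega), zero_add]

theorem beta_mul_map_X_mul_mul_pred (hP : IsMonicOrthogonal L P) (hβ0 : β 0 = 0) (n : ℕ) :
    β n * L (X * P n * P (n - 1)) = β n * L (P n * P n) := by
  cases n with
  | zero => simp [hβ0]
  | succ n => rw [Nat.add_sub_cancel, mul_right_comm, hP.map_X_mul_mul_succ]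

theorem map_X_sq_mul_self (hP : IsMonicOrthogonal L P)
    (hrec : ∀ n, X * P n = P (n + 1) + C (β n) * P (n - 1)) (hβ0 : β 0 = 0) (n : ℕ) :
    L (X ^ 2 * P n * P n) = (β (n + 1) + β n) * L (P n * P n) := by
  calc L (X ^ 2 * P n * P n) = L (X * P n * (X * P n)) := by congr 1; ring
    _ = L (X * P n * P (n + 1) + C (β n) * (X * P n * P (n - 1))) := by
        rw [hrec n]; congr 1; ring
    _ = (β (n + 1) + β n) * L (P n * P n) := by
        rw [map_add, L.map_C_mul, hP.beta_mul_map_X_mul_mul_pred hβ0, hP.map_X_mul_mul_succ,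
          hP.map_mul_self_succ hrec]
        ring

theorem map_X_pow_three_mul_succ_mul (hP : IsMonicOrthogonal L P)
    (hrec : ∀ n, X * P n = P (n + 1) + C (β n) * P (n - 1)) (hβ0 : β 0 = 0) (n : ℕ) :
    L (X ^ 3 * P (n + 1) * P n) = (β (n + 2) + β (n + 1) + β n) * L (P (n + 1) * P (n + 1)) := by
  calc L (X ^ 3 * P (n + 1) * P n) = L (X ^ 2 * P n * (X * P (n + 1))) := by congr 1; ring
    _ = L (X ^ 2 * P n * P (n + 2) + C (β (n + 1)) * (X ^ 2 * P n * P n)) := by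
        rw [hrec (n + 1), Nat.add_sub_cancel]; congr 1; ring
    _ = (β (n + 2) + β (n + 1) + β n) * L (P (n + 1) * P (n + 1)) := by
        rw [map_add, L.map_C_mul, hP.map_X_pow_mul_mul_add 2 n, hP.map_X_sq_mul_self hrec hβ0,
          hP.map_mul_self_succ hrec (n + 1), hP.map_mul_self_succ hrec n]
        ring

theorem map_one_sub_X_sq_mul_derivative_succ_mul (hP : IsMonicOrthogonal L P)
    (hrec : ∀ n, X * P n = P (n + 1) + C (β n) * P (n - 1)) (hβ0 : β 0 = 0) {α t : K}
    (hpearson : ∀ Q, L ((1 - X ^ 2) * derivative Q) =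
      L ((C (2 * (1 + α)) * X + C (2 * t) * X * (1 - X ^ 2)) * Q)) (n : ℕ) :
    L ((1 - X ^ 2) * derivative (P (n + 1)) * P n) =
      (n + 2 + 2 * α + 2 * t - 2 * t * (β (n + 2) + β (n + 1) + β n)) *
        L (P (n + 1) * P (n + 1)) := by
  have hibp := hpearson (P (n + 1) * P n)
  rw [show (1 - X ^ 2) * derivative (P (n + 1) * P n)
      = (1 - X ^ 2) * derivative (P (n + 1)) * P n + (1 - X ^ 2) * derivative (P n) * P (n + 1)
      by rw [derivative_mul]; ring,
    show (C (2 * (1 + α)) * X + C (2 * t) * X * (1 - X ^ 2)) * (P (n + 1) * P n)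
      = C (2 * (1 + α)) * (X * P n * P (n + 1)) + C (2 * t) * (X * P n * P (n + 1))
        - C (2 * t) * (X ^ 3 * P (n + 1) * P n) by ring,
    map_add, map_sub, map_add, L.map_C_mul, L.map_C_mul, L.map_C_mul,
    hP.map_one_sub_X_sq_mul_derivative_mul_succ, hP.map_X_mul_mul_succ,
    hP.map_X_pow_three_mul_succ_mul hrec hβ0] at hibp
  linear_combination hibp

theorem first_order_relation (hP : IsMonicOrthogonal L P)
    (hrec : ∀ n, X * P n = P (n + 1) + C (β n) * P (n - 1)) (hβ0 : β 0 = 0) {α t : K}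
    (hpearson : ∀ Q, L ((1 - X ^ 2) * derivative Q) =
      L ((C (2 * (1 + α)) * X + C (2 * t) * X * (1 - X ^ 2)) * Q))
    (hnz : ∀ n, L (P n * P n) ≠ 0) (n : ℕ) :
    β (n + 1) * (2 * n + 3 + 2 * α - 2 * t * β (n + 1) - 2 * t * β (n + 2))
      - β n * (2 * n - 1 + 2 * α - 2 * t * β (n - 1) - 2 * t * β n)
      = 1 - 2 * t * β (n + 1) + 2 * t * β n := by
  have hdiff :
      derivative (X * P n) = derivative (P (n + 1)) + C (β n) * derivative (P (n - 1)) := by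
    rw [hrec n, derivative_add, derivative_C_mul]
  have key := congrArg (fun p => L ((1 - X ^ 2) * P n * p)) hdiff
  have hlhs : (1 - X ^ 2) * P n * derivative (X * P n) = P n * P n - X ^ 2 * P n * P n
      + (1 - X ^ 2) * derivative (P n) * P (n + 1)
      + C (β n) * ((1 - X ^ 2) * derivative (P n) * P (n - 1)) := by
    calc (1 - X ^ 2) * P n * derivative (X * P n)
        = P n * P n - X ^ 2 * P n * P n + (1 - X ^ 2) * derivative (P n) * (X * P n) := by
          rw [derivative_mul, derivative_X]; ring
      _ = _ := by rw [hrec n]; ring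
  have hrhs : (1 - X ^ 2) * P n * (derivative (P (n + 1)) + C (β n) * derivative (P (n - 1)))
      = (1 - X ^ 2) * derivative (P (n + 1)) * P n
        + C (β n) * ((1 - X ^ 2) * derivative (P (n - 1)) * P n) := by ring
  have hcross : β n * L ((1 - X ^ 2) * derivative (P n) * P (n - 1))
      = β n * (n + 1 + 2 * α + 2 * t - 2 * t * (β (n + 1) + β n + β (n - 1))) *
        L (P n * P n) := by
    cases n with
    | zero => simp [hβ0]
    | succ n =>
      rw [Nat.add_sub_cancel, hP.map_one_sub_X_sq_mul_derivative_succ_mul hrec hβ0 hpearson]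
      push_cast; ring
  have hback : β n * L ((1 - X ^ 2) * derivative (P (n - 1)) * P n)
      = -(β n * (n - 1)) * L (P n * P n) := by
    cases n with
    | zero => simp [hβ0]
    | succ n =>
      rw [Nat.add_sub_cancel, hP.map_one_sub_X_sq_mul_derivative_mul_succ]
      push_cast; ring
  simp only [hlhs, hrhs, map_add, map_sub, L.map_C_mul] at key
  rw [hcross, hback, hP.map_X_sq_mul_self hrec hβ0, hP.map_one_sub_X_sq_mul_derivative_mul_succ,
    hP.map_one_sub_X_sq_mul_derivative_succ_mul hrec hβ0 hpearson,
    hP.map_mul_self_succ hrec] at key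
  apply mul_right_cancel₀ (hnz n)
  linear_combination -key

end Recurrence

end IsMonicOrthogonal

theorem difference_eq_of_first_order_relation {K : Type*} [Field K] {α t : K} {β : ℕ → K}
    (hβ0 : β 0 = 0)
    (hS : ∀ n : ℕ, β (n + 1) * (2 * n + 3 + 2 * α - 2 * t * β (n + 1) - 2 * t * β (n + 2))
      - β n * (2 * n - 1 + 2 * α - 2 * t * β (n - 1) - 2 * t * β n)
      = 1 - 2 * t * β (n + 1) + 2 * t * β n) (n : ℕ) :
    ((n : K) - 2 * t * β n) ^ 2 + 2 * α * ((n : K) - 2 * t * β n) -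
      β n * (2 * n - 1 + 2 * α - 2 * t * β (n - 1) - 2 * t * β n) *
        (2 * n + 1 + 2 * α - 2 * t * β n - 2 * t * β (n + 1)) = 0 := by
  induction n with
  | zero => simp [hβ0]
  | succ n ih =>
    rw [Nat.add_sub_cancel]
    push_cast
    linear_combination ih - (2 * n + 1 + 2 * α - 2 * t * β n - 2 * t * β (n + 1)) * hS n

theorem intervalIntegrable_one_sub_rpow_mul_one_add_rpow {a b : ℝ} (ha : -1 < a) (hb : -1 < b) :
    IntervalIntegrable (fun x : ℝ => (1 - x) ^ a * (1 + x) ^ b) volume (-1) 1 := by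
  have hleft : IntervalIntegrable (fun x : ℝ => (1 + x) ^ b) volume (-1) 0 := by
    simpa [add_comm] using (intervalIntegrable_rpow' hb (a := 0) (b := 1)).comp_add_right 1
  have hright : IntervalIntegrable (fun x : ℝ => (1 - x) ^ a) volume 0 1 := by
    simpa using ((intervalIntegrable_rpow' ha (a := 0) (b := 1)).comp_sub_left 1).symm
  refine (hleft.continuousOn_mul ?_).trans (hright.mul_continuousOn ?_)
  · refine ContinuousOn.rpow_const (by fun_prop) fun x hx => Or.inl ?_
    rw [Set.uIcc_of_le (by norm_num)] at hx
    linarith [hx.2]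
  · refine ContinuousOn.rpow_const (by fun_prop) fun x hx => Or.inl ?_
    rw [Set.uIcc_of_le (by norm_num)] at hx
    linarith [hx.1]

theorem intervalIntegrable_one_sub_sq_rpow {α : ℝ} (hα : -1 < α) :
    IntervalIntegrable (fun x : ℝ => (1 - x ^ 2) ^ α) volume (-1) 1 := by
  refine (intervalIntegrable_one_sub_rpow_mul_one_add_rpow hα hα).congr fun x hx => ?_
  rw [Set.uIoc_of_le (by norm_num)] at hx
  rw [← Real.mul_rpow (by linarith [hx.2]) (by linarith [hx.1])]
  ring_nf

theorem integral_id_mul_eq_zero_of_even {w : ℝ → ℝ} (hw : ∀ x, w (-x) = w x) (a : ℝ) :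
    ∫ x in -a..a, x * w x = 0 := by
  have h := integral_comp_neg (a := -a) (b := a) (fun x => x * w x)
  simp only [neg_neg, hw, neg_mul, intervalIntegral.integral_neg] at h
  linarith

noncomputable def weightedIntegral {w : ℝ → ℝ} {a b : ℝ}
    (hw : IntervalIntegrable w volume a b) : ℝ[X] →ₗ[ℝ] ℝ where
  toFun q := ∫ x in a..b, q.eval x * w x
  map_add' p q := by
    simp only [eval_add, add_mul]
    exact integral_add (hw.continuousOn_mul p.continuous.continuousOn)
      (hw.continuousOn_mul q.continuous.continuousOn)
  map_smul' c q := by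
    simp only [eval_smul, smul_eq_mul, mul_assoc, RingHom.id_apply]
    exact integral_const_mul c _

theorem weightedIntegral_apply {w : ℝ → ℝ} {a b : ℝ} (hw : IntervalIntegrable w volume a b)
    (q : ℝ[X]) : weightedIntegral hw q = ∫ x in a..b, q.eval x * w x := rfl

theorem weightedIntegral_pearson {α t : ℝ} (hα : -1 < α) {w : ℝ → ℝ}
    (hw : ∀ x, w x = (1 - x ^ 2) ^ α * Real.exp (-t * x ^ 2))
    (hwi : IntervalIntegrable w volume (-1) 1) (Q : ℝ[X]) :
    weightedIntegral hwi ((1 - X ^ 2) * derivative Q) =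
      weightedIntegral hwi ((C (2 * (1 + α)) * X + C (2 * t) * X * (1 - X ^ 2)) * Q) := by
  set D := (1 - X ^ 2) * derivative Q - (C (2 * (1 + α)) * X + C (2 * t) * X * (1 - X ^ 2)) * Q
  set g : ℝ → ℝ := fun x => (1 - x ^ 2) ^ (α + 1) * Real.exp (-t * x ^ 2) * Q.eval x
  have hg : ∀ x ∈ Set.Ioo (-1 : ℝ) 1, HasDerivAt g (D.eval x * w x) x := by
    intro x hx
    have hpos : 0 < 1 - x ^ 2 := by nlinarith [hx.1, hx.2]
    have h1 : HasDerivAt (fun x : ℝ => (1 - x ^ 2) ^ (α + 1))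
        (-(2 * x * (α + 1) * (1 - x ^ 2) ^ α)) x := by
      have := ((hasDerivAt_pow 2 x).const_sub 1).rpow_const (p := α + 1) (Or.inl hpos.ne')
      simpa using this
    have h2 : HasDerivAt (fun x : ℝ => Real.exp (-t * x ^ 2))
        (Real.exp (-t * x ^ 2) * (-t * (2 * x))) x := by
      simpa using ((hasDerivAt_pow 2 x).const_mul (-t)).exp
    refine ((h1.mul h2).mul (Q.hasDerivAt x)).congr_deriv ?_
    simp only [Pi.mul_apply, D, eval_sub, eval_mul, eval_add, eval_C, eval_X, eval_one, eval_pow]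
    rw [hw, Real.rpow_add hpos, Real.rpow_one]
    ring
  have hzero : ∀ x : ℝ, x ^ 2 = 1 → g x = 0 := fun x hx => by
    simp [g, hx, Real.zero_rpow (show α + 1 ≠ 0 by linarith)]
  have hcont : ContinuousOn g (Set.Icc (-1) 1) := by
    refine Continuous.continuousOn ?_
    have : Continuous fun x : ℝ => (1 - x ^ 2) ^ (α + 1) :=
      (continuous_const.sub (continuous_pow 2)).rpow_const fun _ => Or.inr (by linarith)
    exact (this.mul (by fun_prop)).mul Q.continuous
  have hftc := integral_eq_sub_of_hasDerivAt_of_le (by norm_num) hcont hg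
    (hwi.continuousOn_mul D.continuous.continuousOn)
  rw [hzero 1 (by norm_num), hzero (-1) (by norm_num), sub_zero] at hftc
  rw [← sub_eq_zero, ← map_sub, weightedIntegral_apply]
  exact hftc

theorem beta_difference_eq (α t : ℝ) (hα : α > -1)
    (w : ℝ → ℝ) (hw : ∀ x, w x = (1 - x ^ 2) ^ α * Real.exp (-t * x ^ 2))
    (P : ℕ → Polynomial ℝ)
    (hmonic : ∀ n, (P n).Monic)
    (hdeg : ∀ n, (P n).natDegree = n)
    (horth : ∀ m n, m ≠ n → (∫ x in (-1:ℝ)..1, (P m).eval x * (P n).eval x * w x) = 0)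
    (h : ℕ → ℝ)
    (hh : ∀ n, h n = ∫ x in (-1:ℝ)..1, ((P n).eval x) ^ 2 * w x)
    (hpos : ∀ n, 0 < h n)
    (β : ℕ → ℝ) (hβ0 : β 0 = 0)
    (hrec : ∀ n, 1 ≤ n → ∀ x : ℝ, x * (P n).eval x = (P (n+1)).eval x + β n * (P (n-1)).eval x)
    :
    ∀ n : ℕ, 1 ≤ n →
      ((n : ℝ) - 2 * t * β n) ^ 2 + 2 * α * ((n : ℝ) - 2 * t * β n) -
        β n * (2 * n - 1 + 2 * α - 2 * t * β (n-1) - 2 * t * β n) *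
          (2 * n + 1 + 2 * α - 2 * t * β n - 2 * t * β (n+1)) = 0 := by
  have hwi : IntervalIntegrable w volume (-1) 1 := by
    rw [funext hw]
    exact (intervalIntegrable_one_sub_sq_rpow hα).mul_continuousOn (by fun_prop)
  set L := weightedIntegral hwi
  have hP : IsMonicOrthogonal L P :=
    ⟨hmonic, hdeg, fun m n hmn => by simpa [L, weightedIntegral_apply] using horth m n hmn⟩
  have hnorm : ∀ n, L (P n * P n) ≠ 0 := fun n => by
    simpa [L, weightedIntegral_apply, hh, sq] using (hpos n).ne'
  have hX : L X = 0 := by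
    simpa [L, weightedIntegral_apply] using
      integral_id_mul_eq_zero_of_even (fun x => by rw [hw, hw, neg_sq]) 1
  have hP1 := hP.apply_one_eq_X hX (hnorm 0)
  have hrecP : ∀ n, X * P n = P (n + 1) + C (β n) * P (n - 1) := by
    rintro (_ | n)
    · simp [hP.apply_zero, hP1, hβ0]
    · exact Polynomial.funext fun x => by simpa using hrec (n + 1) (by omega) x
  have hS := hP.first_order_relation hrecP hβ0 (weightedIntegral_pearson hα hw hwi) hnorm
  exact fun n _ => difference_eq_of_first_order_relation hβ0 hS n
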